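/- arXiv:1901.02468 — 2 statements merged into one kernel-verified Lean document; each statement's English description precedes it below -/
import Mathlib

section
/- Let S = S(\lambda_1,...,\lambda_d) be an n-vertex spider with \lambda a partition, and fix i with 2 \leq i < d. Write n = q(\lambda_i+1) + r with 0 \leq r < \lambda_i+1, r = q d' + r' with 0 \leq r' < q, and set t = \lambda_{i+1} + ... + \lambda_d, assuming t > 1. If q \geq (\lambda_i+1)/(t-1), then S has no connected partition with r' blocks of size \lambda_i + d' + 2 and q - r' blocks of size \lambda_i + d' + 1. -/
open SimpleGraph

/-- The spider graph with `d` legs of lengths `l i`: a centre vertex (`none`)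
joined to one endpoint of each of `d` disjoint paths with `l i` vertices. -/
def spider (d : ℕ) (l : Fin d → ℕ) : SimpleGraph (Option (Σ i : Fin d, Fin (l i))) :=
  SimpleGraph.fromRel (fun u v =>
    (∃ (i : Fin d) (h : 0 < l i), u = none ∧ v = some ⟨i, ⟨0, h⟩⟩) ∨
    (∃ (i : Fin d) (j k : Fin (l i)), (j : ℕ) + 1 = (k : ℕ) ∧ u = some ⟨i, j⟩ ∧ v = some ⟨i, k⟩))

/-- A graph has a connected partition of type `μ` if its vertex set can be partitioned
into blocks, each inducing a connected subgraph, whose multiset of sizes is `μ`. -/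
def HasConnectedPartition {V : Type} [Fintype V] [DecidableEq V]
    (G : SimpleGraph V) (μ : Multiset ℕ) : Prop :=
  ∃ P : Finpartition (Finset.univ : Finset V),
    (∀ p ∈ P.parts, (G.induce (p : Set V)).Connected) ∧
    P.parts.val.map Finset.card = μ

lemma spider_adj_fst {d : ℕ} {l : Fin d → ℕ} {a b : Σ j : Fin d, Fin (l j)}
    (h : (spider d l).Adj (some a) (some b)) : a.1 = b.1 := by
  rw [spider, SimpleGraph.fromRel_adj] at h
  obtain ⟨-, h | h⟩ := h <;>
    rcases h with ⟨i, hi, h1, h2⟩ | ⟨i, j, k, hjk, h1, h2⟩ <;>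
    simp_all

lemma spider_reach_aux {d : ℕ} {l : Fin d → ℕ} {s : Set (Option (Σ j : Fin d, Fin (l j)))}
    (hs : none ∉ s) {u v : s}
    (h : ((spider d l).induce s).Reachable u v) :
    Option.map Sigma.fst u.1 = Option.map Sigma.fst v.1 := by
  obtain ⟨p⟩ := h
  induction p with
  | nil => rfl
  | @cons x y z ha p ih =>
    refine Eq.trans ?_ ih
    have hadj : (spider d l).Adj x.1 y.1 := ha
    obtain ⟨x, hx⟩ := x
    obtain ⟨y, hy⟩ := y
    match x, y with
    | none, _ => exact absurd hx hs
    | _, none => exact absurd hy hs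
    | some a, some b =>
      simpa using congrArg some (spider_adj_fst hadj)

/-- Let `S(λ)` be an `n`-vertex spider, and fix `i` with `2 ≤ i < d` (1-indexed).
Write `n = q(λ_i+1) + r`, `0 ≤ r < λ_i+1`, `r = q d' + r'`, `0 ≤ r' < q`, and set
`t = λ_{i+1} + ... + λ_d`, assuming `t > 1`. If `q ≥ (λ_i+1)/(t-1)`, then `S(λ)` has no
connected partition with `r'` blocks of size `λ_i + d' + 2` and `q - r'` blocks of size
`λ_i + d' + 1`. -/
theorem spider_quotient_missing'' (d n i q r d' r' li t : ℕ) (hi2 : 2 ≤ i) (hid : i < d)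
    (l : Fin d → ℕ)
    (hpos : ∀ j, 0 < l j) (hmono : ∀ j k : Fin d, j ≤ k → l k ≤ l j)
    (hn : n = 1 + ∑ j, l j)
    (hli : l ⟨i - 1, by omega⟩ = li)
    (ht : t = ∑ j ∈ Finset.univ.filter (fun j => (⟨i - 1, by omega⟩ : Fin d) < j), l j)
    (ht1 : 1 < t)
    (hq : n = q * (li + 1) + r) (hr : r < li + 1)
    (hd' : r = q * d' + r') (hr' : r' < q)
    (hquot : ((li : ℚ) + 1) / ((t : ℚ) - 1) ≤ (q : ℚ)) :
    ¬ HasConnectedPartition (spider d l)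
      (Multiset.replicate r' (li + d' + 2) + Multiset.replicate (q - r') (li + d' + 1)) := by
  -- arithmetic preliminaries
  have hq0 : 0 < q := Nat.pos_of_ne_zero (by omega)
  have htq : li + 1 + q ≤ q * t := by
    have h2t : (2 : ℚ) ≤ (t : ℚ) := by exact_mod_cast ht1
    have h0 : (0 : ℚ) < (t : ℚ) - 1 := by linarith
    have h1 : (li : ℚ) + 1 ≤ (q : ℚ) * ((t : ℚ) - 1) := by
      have := (div_le_iff₀ h0).mp hquot
      linarith
    have h2 : (li : ℚ) + 1 + q ≤ (q : ℚ) * t := by ring_nf at h1 ⊢; linarith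
    exact_mod_cast h2
  have hd't : d' + 2 ≤ t := by
    have h1 : q * (d' + 1) < q * t := by
      have : q * d' ≤ li := by omega
      calc q * (d' + 1) = q * d' + q := by ring
        _ ≤ li + q := by omega
        _ < q * t := by omega
    have := Nat.lt_of_mul_lt_mul_left h1
    omega
  -- the partition
  rintro ⟨P, hconn, hcard⟩
  have hi' : i - 1 < d := by omega
  let c : Fin d := ⟨i - 1, hi'⟩
  have hlc : l c = li := hli
  have htc : t = ∑ j ∈ Finset.univ.filter (fun j => c < j), l j := ht
  -- every part has size li+d'+1 or li+d'+2
  have hsize : ∀ B ∈ P.parts, B.card = li + d' + 2 ∨ B.card = li + d' + 1 := by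
    intro B hB
    have : B.card ∈ Multiset.map Finset.card P.parts.val :=
      Multiset.mem_map_of_mem _ hB
    rw [hcard, Multiset.mem_add] at this
    rcases this with h | h
    · exact Or.inl (Multiset.eq_of_mem_replicate h)
    · exact Or.inr (Multiset.eq_of_mem_replicate h)
  -- the part containing the centre
  obtain ⟨C, hC, hnoneC⟩ := P.exists_mem (Finset.mem_univ none)
  -- every vertex in a leg with index ≥ c lies in C
  have key : ∀ p : Σ j : Fin d, Fin (l j), c ≤ p.1 → some p ∈ C := by
    rintro ⟨pj, pk⟩ hcp
    obtain ⟨B, hB, hpB⟩ := P.exists_mem (Finset.mem_univ (some ⟨pj, pk⟩))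
    suffices hnB : none ∈ B by
      rwa [P.eq_of_mem_parts hB hC hnB hnoneC] at hpB
    by_contra hnB
    have hnB' : none ∉ (B : Set (Option (Σ j : Fin d, Fin (l j)))) := by simpa using hnB
    have hconnB := hconn B hB
    -- all elements of B are in leg pj
    have hleg : ∀ x ∈ B, ∃ k : Fin (l pj), x = some ⟨pj, k⟩ := by
      intro x hx
      have hreach := hconnB.preconnected ⟨x, by simpa using hx⟩ ⟨some ⟨pj, pk⟩, by simpa using hpB⟩
      have := spider_reach_aux hnB' hreach
      obtain _ | ⟨xj, xk⟩ := x
      · exact absurd hx hnB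
      · have hxj : xj = pj := by simpa using this
        subst hxj
        exact ⟨xk, rfl⟩
    -- hence B.card ≤ l pj ≤ li, contradicting B.card ≥ li + d' + 1
    have hsub : B ⊆ (Finset.univ : Finset (Fin (l pj))).image (fun k => some ⟨pj, k⟩) := by
      intro x hx
      obtain ⟨k, rfl⟩ := hleg x hx
      exact Finset.mem_image.2 ⟨k, Finset.mem_univ _, rfl⟩
    have hBle : B.card ≤ l pj := by
      calc B.card ≤ _ := Finset.card_le_card hsub
        _ ≤ (Finset.univ : Finset (Fin (l pj))).card := Finset.card_image_le
        _ = l pj := by simp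
    have hle : l pj ≤ li := hlc ▸ hmono c pj hcp
    have := hsize B hB
    omega
  -- the lower bound set inside C
  set S' : Finset (Σ j : Fin d, Fin (l j)) :=
    Finset.univ.filter (fun p => c ≤ p.1) with hS'
  have hS'card : S'.card = li + t := by
    have hsig : S' = (Finset.univ.filter (fun j => c ≤ j)).sigma (fun j => Finset.univ) := by
      ext ⟨j, k⟩
      simp [hS']
    have hins : Finset.univ.filter (fun j => c ≤ j)
        = insert c (Finset.univ.filter (fun j => c < j)) := by
      ext j
      simp only [Finset.mem_filter, Finset.mem_univ, true_and, Finset.mem_insert]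
      constructor
      · intro h
        rcases eq_or_lt_of_le h with h | h
        · exact Or.inl h.symm
        · exact Or.inr h
      · rintro (rfl | h)
        · exact le_refl _
        · exact le_of_lt h
    rw [hsig, Finset.card_sigma]
    simp only [Finset.card_univ, Fintype.card_fin]
    rw [hins, Finset.sum_insert (by simp)]
    rw [hlc, ← htc]
  have hTsub : insert none (S'.image some) ⊆ C := by
    intro x hx
    rcases Finset.mem_insert.1 hx with rfl | hx
    · exact hnoneC
    · obtain ⟨p, hp, rfl⟩ := Finset.mem_image.1 hx
      exact key p (by simpa [hS'] using hp)
  have hTcard : (insert none (S'.image some)).card = li + t + 1 := by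
    rw [Finset.card_insert_of_notMem (by simp),
      Finset.card_image_of_injective _ (Option.some_injective _), hS'card]
  have hCge : li + t + 1 ≤ C.card := hTcard ▸ Finset.card_le_card hTsub
  have := hsize C hC
  omega
end

section
/- Every spider S(\lambda_1,...,\lambda_d) on n vertices with d \geq \log_2 n + 1 is missing a connected partition of some type, i.e., there exists a partition \mu of n such that S has no connected partition of type \mu. -/
open SimpleGraph

/-- Adjacent non-centre vertices of the spider lie on the same leg. -/
lemma spider_adj_leg {d : ℕ} {l : Fin d → ℕ} {u v : Option (Σ i : Fin d, Fin (l i))}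
    (h : (spider d l).Adj u v) (hu : u ≠ none) (hv : v ≠ none) :
    u.map Sigma.fst = v.map Sigma.fst := by
  rw [spider, SimpleGraph.fromRel_adj] at h
  obtain ⟨-, h | h⟩ := h
  · rcases h with ⟨i, hi, rfl, rfl⟩ | ⟨i, j, k, hjk, rfl, rfl⟩
    · exact absurd rfl hu
    · simp
  · rcases h with ⟨i, hi, rfl, rfl⟩ | ⟨i, j, k, hjk, rfl, rfl⟩
    · exact absurd rfl hv
    · simp

/-- In a set of vertices avoiding the centre, reachable vertices lie on the same leg. -/
lemma spider_reach_leg {d : ℕ} {l : Fin d → ℕ} {p : Set (Option (Σ i : Fin d, Fin (l i)))}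
    (hp : none ∉ p) {a b : ↑p} (h : ((spider d l).induce p).Reachable a b) :
    (a : Option (Σ i : Fin d, Fin (l i))).map Sigma.fst
      = (b : Option (Σ i : Fin d, Fin (l i))).map Sigma.fst := by
  obtain ⟨w⟩ := h
  induction w with
  | nil => rfl
  | @cons x y z hxy w ih =>
      exact (spider_adj_leg hxy (fun h => hp (h ▸ x.2)) (fun h => hp (h ▸ y.2))).trans ih

/-- The finset of vertices on leg `i`. -/
def legF (d : ℕ) (l : Fin d → ℕ) (i : Fin d) : Finset (Option (Σ i : Fin d, Fin (l i))) :=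
  Finset.univ.filter (fun v => v.map Sigma.fst = some i)

lemma legF_card {d : ℕ} (l : Fin d → ℕ) (i : Fin d) : (legF d l i).card = l i := by
  have himg : legF d l i
      = Finset.univ.image (fun j : Fin (l i) => (some ⟨i, j⟩ : Option (Σ i : Fin d, Fin (l i)))) := by
    ext v
    simp only [legF, Finset.mem_filter, Finset.mem_univ, true_and, Finset.mem_image]
    constructor
    · intro h
      match v with
      | none => simp at h
      | some ⟨i', j⟩ =>
          simp only [Option.map_some] at h
          obtain rfl : i' = i := Option.some.inj h
          exact ⟨j, rfl⟩
    · rintro ⟨j, rfl⟩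
      rfl
  rw [himg, Finset.card_image_of_injective _ (fun a b hab => by simpa using hab),
    Finset.card_univ, Fintype.card_fin]

lemma sum_filter_ge_split {d : ℕ} (l : Fin d → ℕ) (m : ℕ) (hm : m < d) :
    (∑ i ∈ Finset.univ.filter (fun i : Fin d => m ≤ (i : ℕ)), l i)
      = l ⟨m, hm⟩ + ∑ i ∈ Finset.univ.filter (fun i : Fin d => m + 1 ≤ (i : ℕ)), l i := by
  have hset : Finset.univ.filter (fun i : Fin d => m ≤ (i : ℕ))
      = insert ⟨m, hm⟩ (Finset.univ.filter (fun i : Fin d => m + 1 ≤ (i : ℕ))) := by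
    ext i
    simp [Fin.ext_iff]
    omega
  rw [hset, Finset.sum_insert (by simp)]

/-- Existence of a good modulus `q`. -/
lemma exists_good_q (d n : ℕ) (hd : 1 ≤ d) (l : Fin d → ℕ) (hpos : ∀ i, 0 < l i)
    (hmono : ∀ i j : Fin d, i ≤ j → l j ≤ l i) (hn : n = 1 + ∑ i, l i)
    (hle : n ≤ 2 ^ (d - 1)) :
    ∃ q, 2 ≤ q ∧ (∑ i, l i / q) + 2 ≤ n / q := by
  by_contra hcon
  push_neg at hcon
  set g : ℕ → ℕ := fun m => ∑ i ∈ Finset.univ.filter (fun i : Fin d => m ≤ (i : ℕ)), l i with hg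
  have key : ∀ k : Fin d, g ((k : ℕ) + 1) ≤ l k := by
    intro k
    by_contra hkey
    push_neg at hkey
    set q := l k + 1 with hq
    have hq2 : 2 ≤ q := by have := hpos k; omega
    have h1 := hcon q hq2
    have hsplit := Finset.sum_filter_add_sum_filter_not Finset.univ
      (fun i : Fin d => ((k : ℕ) ≤ (i : ℕ))) l
    have hsplitdiv := Finset.sum_filter_add_sum_filter_not Finset.univ
      (fun i : Fin d => ((k : ℕ) ≤ (i : ℕ))) (fun i => l i / q)
    -- the sum over i ≥ k of l i / q is zero
    have hzero : ∀ i ∈ Finset.univ.filter (fun i : Fin d => (k : ℕ) ≤ (i : ℕ)), l i / q = 0 := by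
      intro i hi
      simp only [Finset.mem_filter] at hi
      have : l i ≤ l k := hmono k i (by exact_mod_cast hi.2)
      exact Nat.div_eq_of_lt (by omega)
    have hzero' : (∑ i ∈ Finset.univ.filter (fun i : Fin d => (k : ℕ) ≤ (i : ℕ)), l i / q) = 0 :=
      Finset.sum_eq_zero hzero
    set S := ∑ i ∈ Finset.univ.filter (fun i : Fin d => ¬ ((k : ℕ) ≤ (i : ℕ))), l i / q with hS
    have hSdiv : (∑ i, l i / q) = S := by omega
    have hSA : q * S ≤ ∑ i ∈ Finset.univ.filter (fun i : Fin d => ¬ ((k : ℕ) ≤ (i : ℕ))), l i := by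
      rw [hS, Finset.mul_sum]
      exact Finset.sum_le_sum (fun i _ => Nat.mul_div_le (l i) q)
    have hgsplit : g (k : ℕ) = l k + g ((k : ℕ) + 1) := by
      have := sum_filter_ge_split l (k : ℕ) k.isLt
      simpa [hg] using this
    have hA : (∑ i ∈ Finset.univ.filter (fun i : Fin d => ((k : ℕ) ≤ (i : ℕ))), l i) = g (k : ℕ) := rfl
    have h2q : 2 * q - 1 ≤ g (k : ℕ) := by omega
    have hlow : S * q + 2 * q ≤ n := by
      have hcomm : S * q = q * S := Nat.mul_comm _ _
      omega
    have h6 : S + 2 ≤ n / q := by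
      refine (Nat.le_div_iff_mul_le (by omega : 0 < q)).2 ?_
      have e : (S + 2) * q = S * q + 2 * q := by ring
      omega
    omega
  have grow : ∀ j, j < d → 2 ^ j ≤ g (d - 1 - j) := by
    intro j
    induction j with
    | zero =>
        intro _
        have hk : d - 1 < d := by omega
        have hmem : (⟨d - 1, hk⟩ : Fin d) ∈ Finset.univ.filter
            (fun i : Fin d => d - 1 - 0 ≤ (i : ℕ)) := by
          simp only [Finset.mem_filter, Finset.mem_univ, true_and]
          omega
        calc (1 : ℕ) ≤ l ⟨d - 1, hk⟩ := hpos _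
          _ ≤ g (d - 1 - 0) := Finset.single_le_sum (fun i _ => Nat.zero_le _) hmem
    | succ j ih =>
        intro hj
        have hk : d - 1 - (j + 1) < d := by omega
        have hm1 : d - 1 - (j + 1) + 1 = d - 1 - j := by omega
        have hsplit : g (d - 1 - (j + 1)) = l ⟨d - 1 - (j + 1), hk⟩ + g (d - 1 - (j + 1) + 1) := by
          have := sum_filter_ge_split l (d - 1 - (j + 1)) hk
          simpa [hg] using this
        have h2 := key ⟨d - 1 - (j + 1), hk⟩
        have h3 := ih (by omega)
        have e : (2 : ℕ) ^ (j + 1) = 2 ^ j + 2 ^ j := by ring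
        rw [hm1] at *
        omega
  have hfin := grow (d - 1) (by omega)
  have hg0 : g (d - 1 - (d - 1)) = ∑ i, l i := by
    have : d - 1 - (d - 1) = 0 := by omega
    rw [this]
    simp [hg]
  omega

/-- Every spider on `n` vertices with `d ≥ log₂ n + 1` legs is missing a connected partition
of some type `μ ⊢ n`. -/
theorem spider_large_degree_missing_partition (d n : ℕ) (hd : 3 ≤ d) (l : Fin d → ℕ)
    (hpos : ∀ i, 0 < l i) (hmono : ∀ i j : Fin d, i ≤ j → l j ≤ l i)
    (hn : n = 1 + ∑ i, l i)
    (hlog : Real.logb 2 (n : ℝ) + 1 ≤ (d : ℝ)) :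
    ∃ μ : Multiset ℕ, μ.sum = n ∧ (∀ k ∈ μ, 0 < k) ∧
      ¬ HasConnectedPartition (spider d l) μ := by
  classical
  have hsum_ge : d ≤ ∑ i, l i := by
    calc d = ∑ _i : Fin d, 1 := by simp
      _ ≤ ∑ i, l i := Finset.sum_le_sum (fun i _ => hpos i)
  have hn4 : 4 ≤ n := by omega
  -- translate the log condition
  have hle : n ≤ 2 ^ (d - 1) := by
    have hcast : ((d - 1 : ℕ) : ℝ) = (d : ℝ) - 1 := by
      rw [Nat.cast_sub (by omega)]; norm_num
    have h2 : Real.logb 2 (n : ℝ) ≤ ((d - 1 : ℕ) : ℝ) := by rw [hcast]; linarith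
    rw [Real.logb_le_iff_le_rpow (by norm_num) (by positivity : (0:ℝ) < (n:ℝ))] at h2
    · have he : (2 : ℝ) ^ (((d - 1 : ℕ)) : ℝ) = ((2 ^ (d - 1) : ℕ) : ℝ) := by
        rw [Real.rpow_natCast]; push_cast; ring
      rw [he] at h2
      exact_mod_cast h2
  obtain ⟨q, hq2, hkey⟩ := exists_good_q d n (by omega) l hpos hmono hn hle
  set k := n / q with hk
  set r := n % q with hr
  have hk2 : 2 ≤ k := le_trans (by omega) hkey
  have hdm : q * k + r = n := Nat.div_add_mod n q
  refine ⟨(q + r) ::ₘ Multiset.replicate (k - 1) q, ?_, ?_, ?_⟩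
  · -- the sum is n
    rw [Multiset.sum_cons, Multiset.sum_replicate, smul_eq_mul]
    have e : (k - 1) * q + q = q * k := by
      have h3 : k - 1 + 1 = k := by omega
      calc (k - 1) * q + q = (k - 1 + 1) * q := by ring
        _ = k * q := by rw [h3]
        _ = q * k := by ring
    omega
  · -- all parts positive
    intro x hx
    rcases Multiset.mem_cons.1 hx with rfl | hx
    · omega
    · rw [Multiset.eq_of_mem_replicate hx]; omega
  · rintro ⟨P, hconn, hμ⟩
    -- number of parts
    have hpc : P.parts.card = k := by
      have h1 := congrArg Multiset.card hμ
      rw [Multiset.card_map] at h1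
      simp only [Multiset.card_cons, Multiset.card_replicate] at h1
      have : P.parts.card = P.parts.val.card := rfl
      omega
    -- each part has at least q elements
    have hqle : ∀ p ∈ P.parts, q ≤ p.card := by
      intro p hp
      have hmem : p.card ∈ ((q + r) ::ₘ Multiset.replicate (k - 1) q) := by
        rw [← hμ]
        exact Multiset.mem_map_of_mem _ hp
      rcases Multiset.mem_cons.1 hmem with h | h
      · omega
      · rw [Multiset.eq_of_mem_replicate h]
    -- the part containing the centre
    obtain ⟨p₀, hp₀, hnp₀⟩ := P.exists_mem
      (Finset.mem_univ (none : Option (Σ i : Fin d, Fin (l i))))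
    have hnone_not : ∀ p ∈ P.parts, p ≠ p₀ →
        (none : Option (Σ i : Fin d, Fin (l i))) ∉ p := by
      intro p hp hne hmem
      exact (Finset.disjoint_left.1
        (P.disjoint (Finset.mem_coe.2 hp) (Finset.mem_coe.2 hp₀) hne)) hmem hnp₀
    set T := P.parts.erase p₀ with hTdef
    have hT : T.card = k - 1 := by rw [hTdef, Finset.card_erase_of_mem hp₀, hpc]
    -- each non-centre part lies in one leg
    have hassign : ∀ p ∈ T, ∃ i : Fin d, p ⊆ legF d l i := by
      intro p hpT
      have hp : p ∈ P.parts := Finset.mem_of_mem_erase hpT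
      have hnn : (none : Option (Σ i : Fin d, Fin (l i))) ∉ p :=
        hnone_not p hp (Finset.ne_of_mem_erase hpT)
      have hnn' : (none : Option (Σ i : Fin d, Fin (l i))) ∉ (p : Set _) := by
        simpa using hnn
      obtain ⟨u, hu⟩ := P.nonempty_of_mem_parts hp
      have hconn' := hconn p hp
      rcases u with _ | ⟨i, j⟩
      · exact absurd hu hnn
      · refine ⟨i, fun v hv => ?_⟩
        have hre : ((spider d l).induce (p : Set _)).Reachable
            ⟨some ⟨i, j⟩, Finset.mem_coe.2 hu⟩ ⟨v, Finset.mem_coe.2 hv⟩ :=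
          hconn'.preconnected _ _
        have hleg := spider_reach_leg hnn' hre
        simp only [Option.map_some] at hleg
        simp only [legF, Finset.mem_filter, Finset.mem_univ, true_and]
        exact hleg.symm
    -- assignment function
    let F : Finset (Option (Σ i : Fin d, Fin (l i))) → Fin d := fun p =>
      if h : ∃ i : Fin d, p ⊆ legF d l i then h.choose else ⟨0, by omega⟩
    have hF : ∀ p ∈ T, p ⊆ legF d l (F p) := by
      intro p hpT
      have h := hassign p hpT
      simp only [F, dif_pos h]
      exact h.choose_spec
    have hcount : T.card = ∑ i : Fin d, (T.filter (fun p => F p = i)).card :=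
      Finset.card_eq_sum_card_fiberwise (fun x _ => Finset.mem_univ _)
    have hfiber : ∀ i : Fin d, (T.filter (fun p => F p = i)).card ≤ l i / q := by
      intro i
      rw [Nat.le_div_iff_mul_le (by omega : 0 < q)]
      set s := T.filter (fun p => F p = i) with hs
      have hsT : ∀ p ∈ s, p ∈ P.parts := fun p hp =>
        Finset.mem_of_mem_erase (Finset.mem_filter.1 hp).1
      have hsub : ∀ p ∈ s, p ⊆ legF d l i := by
        intro p hp
        obtain ⟨h1, h2⟩ := Finset.mem_filter.1 hp
        rw [← h2]
        exact hF p h1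
      have hdisj : ∀ x ∈ s, ∀ y ∈ s, x ≠ y → Disjoint x y := by
        intro x hx y hy hne
        exact P.disjoint (Finset.mem_coe.2 (hsT x hx)) (Finset.mem_coe.2 (hsT y hy)) hne
      calc s.card * q = ∑ _p ∈ s, q := by rw [Finset.sum_const, smul_eq_mul]
        _ ≤ ∑ p ∈ s, p.card := Finset.sum_le_sum (fun p hp => hqle p (hsT p hp))
        _ = (s.biUnion id).card := (Finset.card_biUnion hdisj).symm
        _ ≤ (legF d l i).card := Finset.card_le_card (Finset.biUnion_subset.2 hsub)
        _ = l i := legF_card l i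
    have hfinal : k - 1 ≤ ∑ i, l i / q := by
      calc k - 1 = T.card := hT.symm
        _ = ∑ i : Fin d, (T.filter (fun p => F p = i)).card := hcount
        _ ≤ ∑ i, l i / q := Finset.sum_le_sum (fun i _ => hfiber i)
    omega
end
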